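/- Let a : ℕ → (ℝ → ℝ) be a sequence of functions, each infinitely differentiable on the open half-line (−∞,0), such that a 0 (z) = −2/(π·z) for all z < 0 and such that, for every n ∈ ℕ and every z < 0, the second derivative of a (n+1) at z equals −a n (z). Then for every n ≥ 1 there exists a real polynomial p of degree at most 2n−1 such that for all z < 0: a n (z) = (2/π)·(−1)^{n+1}·z^{2n−1}/( (2n−1)! )·ln(−z) + p(z). -/

import Mathlib

open Polynomial Set

noncomputable def pint (q : ℝ[X]) : ℝ[X] :=
  q.sum fun i c => C (c / (i + 1)) * X ^ (i + 1)

lemma derivative_pint (q : ℝ[X]) : (pint q).derivative = q := by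
  unfold pint
  unfold Polynomial.sum
  rw [map_sum]
  conv_rhs => rw [← Polynomial.sum_C_mul_X_pow_eq q]
  unfold Polynomial.sum
  apply Finset.sum_congr rfl
  intro i _
  rw [Polynomial.derivative_C_mul, Polynomial.derivative_X_pow, ← mul_assoc,
    ← Polynomial.C_mul]
  simp only [Nat.add_sub_cancel]
  congr 1
  have : ((i : ℝ) + 1) ≠ 0 := by positivity
  rw [div_mul_eq_mul_div]
  push_cast
  field_simp

lemma degree_pint_le (q : ℝ[X]) : (pint q).degree ≤ q.degree + 1 := by
  unfold pint Polynomial.sum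
  refine (Polynomial.degree_sum_le _ _).trans ?_
  apply Finset.sup_le
  intro i hi
  refine (Polynomial.degree_C_mul_X_pow_le _ _).trans ?_
  have h1 : (i : WithBot ℕ) ≤ q.degree :=
    Polynomial.le_degree_of_ne_zero (Polynomial.mem_support_iff.mp hi)
  calc ((i + 1 : ℕ) : WithBot ℕ) = (i : WithBot ℕ) + 1 := by push_cast; ring
  _ ≤ q.degree + 1 := add_le_add_left h1 1

lemma const_of_derivZero (f : ℝ → ℝ) (h : ∀ z < (0:ℝ), HasDerivAt f 0 z) :
    ∀ z < (0:ℝ), f z = f (-1) := by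
  intro z hz
  have hconv : Convex ℝ (Iio (0:ℝ)) := convex_Iio 0
  refine hconv.is_const_of_fderivWithin_eq_zero (𝕜 := ℝ)
    (fun x hx => ?_) (fun x hx => ?_) hz (by norm_num)
  · exact ((h x hx).differentiableAt).differentiableWithinAt
  · have hmem : Iio (0:ℝ) ∈ nhds x := Iio_mem_nhds hx
    rw [fderivWithin_of_mem_nhds hmem]
    have := ((h x hx).hasFDerivAt).fderiv
    rw [this]
    ext
    simp

lemma affine_of_deriv2_zero (f g : ℝ → ℝ) (h1 : ∀ z < (0:ℝ), HasDerivAt f (g z) z)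
    (h2 : ∀ z < (0:ℝ), HasDerivAt g 0 z) :
    ∃ c d : ℝ, ∀ z < (0:ℝ), f z = c * z + d := by
  have hg : ∀ z < (0:ℝ), g z = g (-1) := const_of_derivZero g h2
  set c := g (-1) with hc
  have h3 : ∀ z < (0:ℝ), HasDerivAt (fun z => f z - c * z) 0 z := by
    intro z hz
    have := (h1 z hz).sub ((hasDerivAt_id z).const_mul c)
    refine this.congr_deriv ?_
    simp [hg z hz]
  have h4 := const_of_derivZero _ h3
  refine ⟨c, f (-1) - c * (-1), fun z hz => ?_⟩
  have := h4 z hz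
  linarith [this]

lemma deriv_glue (f : ℝ → ℝ) (hf : ContDiffOn ℝ (⊤ : ℕ∞) f (Set.Iio 0)) :
    (∀ z < (0:ℝ), HasDerivAt f (deriv f z) z) ∧
    (∀ z < (0:ℝ), HasDerivAt (deriv f) (deriv (deriv f) z) z) := by
  have hopen : IsOpen (Iio (0:ℝ)) := isOpen_Iio
  have hd1 : DifferentiableOn ℝ f (Iio 0) := hf.differentiableOn (by simp)
  have hf' : ContDiffOn ℝ (⊤ : ℕ∞) (deriv f) (Iio 0) := hf.deriv_of_isOpen hopen (by simp)
  have hd2 : DifferentiableOn ℝ (deriv f) (Iio 0) := hf'.differentiableOn (by simp)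
  exact ⟨fun z hz => (hd1.differentiableAt (Iio_mem_nhds hz)).hasDerivAt,
    fun z hz => (hd2.differentiableAt (Iio_mem_nhds hz)).hasDerivAt⟩

lemma solve_second_order (f W W' w : ℝ → ℝ)
    (hf : ContDiffOn ℝ (⊤ : ℕ∞) f (Set.Iio 0))
    (hW : ∀ z < (0:ℝ), HasDerivAt W (W' z) z)
    (hW' : ∀ z < (0:ℝ), HasDerivAt W' (w z) z)
    (heq : ∀ z < (0:ℝ), deriv (deriv f) z = w z) :
    ∃ c d : ℝ, ∀ z < (0:ℝ), f z = W z + (c * z + d) := by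
  have hg := deriv_glue f hf
  have h1 : ∀ z < (0:ℝ), HasDerivAt (fun z => f z - W z)
      (deriv f z - W' z) z := fun z hz => (hg.1 z hz).sub (hW z hz)
  have h2 : ∀ z < (0:ℝ), HasDerivAt (fun z => deriv f z - W' z) 0 z := by
    intro z hz
    have := (hg.2 z hz).sub (hW' z hz)
    refine this.congr_deriv ?_
    simp [heq z hz]
  obtain ⟨c, d, hcd⟩ := affine_of_deriv2_zero _ _ h1 h2
  exact ⟨c, d, fun z hz => by have := hcd z hz; linarith⟩

lemma hasDerivAt_log_neg {z : ℝ} (hz : z < 0) :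
    HasDerivAt (fun z : ℝ => Real.log (-z)) (1 / z) z := by
  have h1 : HasDerivAt (fun z : ℝ => -z) (-1) z := (hasDerivAt_id z).neg
  have h2 := (Real.hasDerivAt_log (by linarith : -z ≠ 0)).comp z h1
  refine h2.congr_deriv (Eq.symm ?_)
  field_simp

lemma hasDerivAt_pow_log (m : ℕ) (hm : 1 ≤ m) {z : ℝ} (hz : z < 0) :
    HasDerivAt (fun z : ℝ => z ^ m * Real.log (-z))
      ((m : ℝ) * z ^ (m - 1) * Real.log (-z) + z ^ (m - 1)) z := by
  have h := (hasDerivAt_pow m z).mul (hasDerivAt_log_neg hz)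
  refine h.congr_deriv (Eq.symm ?_)
  have hzne : z ≠ 0 := ne_of_lt hz
  have hpow : z ^ m = z ^ (m - 1) * z := by
    rw [← pow_succ, Nat.sub_add_cancel hm]
  rw [hpow]
  field_simp

/-- Explicit description of the solutions of the recursion `a''_{n+1} = −a_n` with
`a₀(z) = −2/(πz)` on the half-line `z < 0`: each `a_n`, `n ≥ 1`, equals the logarithmic
profile `(2/π)(−1)^{n+1} z^{2n−1} ln(−z)/(2n−1)!` plus a polynomial of degree `≤ 2n−1`. -/
theorem log_recursion_solutions (a : ℕ → ℝ → ℝ)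
    (hsmooth : ∀ n, ContDiffOn ℝ (⊤ : ℕ∞) (a n) (Set.Iio 0))
    (h0 : ∀ z : ℝ, z < 0 → a 0 z = -2 / (Real.pi * z))
    (hrec : ∀ n : ℕ, ∀ z : ℝ, z < 0 → deriv (deriv (a (n + 1))) z = -a n z) :
    ∀ n : ℕ, 1 ≤ n → ∃ p : Polynomial ℝ, p.degree ≤ (2 * n - 1 : ℕ) ∧
      ∀ z : ℝ, z < 0 →
        a n z = (2 / Real.pi) * (-1) ^ (n + 1) * z ^ (2 * n - 1)
            / (Nat.factorial (2 * n - 1)) * Real.log (-z) + p.eval z := by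
  have hπ : Real.pi ≠ 0 := Real.pi_ne_zero
  intro n hn
  induction n, hn using Nat.le_induction with
  | base =>
    -- a 1 '' = -a 0 = 2/(π z)
    set W : ℝ → ℝ := fun z => (2 / Real.pi) * (z ^ 1 * Real.log (-z)) with hWdef
    set W' : ℝ → ℝ := fun z => (2 / Real.pi) * (Real.log (-z) + 1) with hW'def
    have hW : ∀ z < (0:ℝ), HasDerivAt W (W' z) z := by
      intro z hz
      have := (hasDerivAt_pow_log 1 le_rfl hz).const_mul (2 / Real.pi)
      refine this.congr_deriv (Eq.symm ?_)
      simp [hW'def]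
    have hW' : ∀ z < (0:ℝ), HasDerivAt W' (-(a 0 z)) z := by
      intro z hz
      have := ((hasDerivAt_log_neg hz).add_const 1).const_mul (2 / Real.pi)
      refine this.congr_deriv (Eq.symm ?_)
      rw [h0 z hz]
      have hzne : z ≠ 0 := ne_of_lt hz
      field_simp
    obtain ⟨c, d, hcd⟩ := solve_second_order (a 1) W W' (fun z => -(a 0 z))
      (hsmooth 1) hW hW' (fun z hz => hrec 0 z hz)
    refine ⟨Polynomial.C c * Polynomial.X + Polynomial.C d, ?_, ?_⟩
    · refine le_trans Polynomial.degree_linear_le ?_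
      norm_num
    · intro z hz
      have := hcd z hz
      rw [this]
      simp only [hWdef, Nat.factorial, pow_one]
      push_cast
      ring_nf
      simp [Polynomial.eval_add, Polynomial.eval_mul]
      ring
  | succ n hn ih =>
    obtain ⟨p, hpdeg, hp⟩ := ih
    have e1 : 2 * (n + 1) - 1 = 2 * n + 1 := by omega
    rw [e1]
    set K : ℝ := 2 / Real.pi * (-1) ^ (n + 2) / (Nat.factorial (2 * n + 1)) with hKdef
    -- factorial identity
    have hf1 : (Nat.factorial (2 * n + 1) : ℝ)
        = (2 * n + 1) * ((2 * n) * (Nat.factorial (2 * n - 1))) := by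
      have h2 : 2 * n = (2 * n - 1) + 1 := by omega
      rw [Nat.factorial_succ]
      rw [h2, Nat.factorial_succ, ← h2]
      push_cast
      ring
    have hfacne : (Nat.factorial (2 * n - 1) : ℝ) ≠ 0 := by
      exact_mod_cast Nat.factorial_ne_zero _
    have hnpos : (0:ℝ) < (n : ℝ) := by exact_mod_cast hn
    have hK : K * ((2 * (n:ℝ) + 1) * (2 * n))
        = -(2 / Real.pi * (-1) ^ (n + 1) / (Nat.factorial (2 * n - 1))) := by
      rw [hKdef, hf1]
      have h1 : (2 * (n:ℝ) + 1) ≠ 0 := by positivity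
      have h2 : (2 * (n:ℝ)) ≠ 0 := by positivity
      field_simp
      ring
    set t : ℝ[X] := -(p + C (K * (4 * n + 1)) * X ^ (2 * n - 1)) with htdef
    set r : ℝ[X] := pint (pint t) with hrdef
    set W : ℝ → ℝ := fun z => K * (z ^ (2 * n + 1) * Real.log (-z)) + r.eval z with hWdef
    set W' : ℝ → ℝ := fun z =>
      K * ((2 * (n:ℝ) + 1) * (z ^ (2 * n) * Real.log (-z)) + z ^ (2 * n))
        + (pint t).eval z with hW'def
    have hW : ∀ z < (0:ℝ), HasDerivAt W (W' z) z := by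
      intro z hz
      have h := ((hasDerivAt_pow_log (2 * n + 1) (by omega) hz).const_mul K).add
        (Polynomial.hasDerivAt r z)
      refine h.congr_deriv (Eq.symm ?_)
      rw [hW'def, hrdef, derivative_pint]
      simp only [Nat.add_sub_cancel]
      push_cast
      ring
    have hW' : ∀ z < (0:ℝ), HasDerivAt W' (-(a n z)) z := by
      intro z hz
      have h := ((((hasDerivAt_pow_log (2 * n) (by omega) hz).const_mul
          ((2 * (n:ℝ) + 1))).add (hasDerivAt_pow (2 * n) z)).const_mul K).add
        (Polynomial.hasDerivAt (pint t) z)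
      refine h.congr_deriv (Eq.symm ?_)
      rw [hp z hz, derivative_pint, htdef]
      simp only [Polynomial.eval_neg, Polynomial.eval_add, Polynomial.eval_mul,
        Polynomial.eval_C, Polynomial.eval_pow, Polynomial.eval_X]
      push_cast
      linear_combination (-(z ^ (2 * n - 1) * Real.log (-z))) * hK
    obtain ⟨c, d, hcd⟩ := solve_second_order (a (n + 1)) W W' (fun z => -(a n z))
      (hsmooth (n + 1)) hW hW' (fun z hz => hrec n z hz)
    refine ⟨r + (C c * X + C d), ?_, ?_⟩
    · refine le_trans (Polynomial.degree_add_le _ _) (max_le ?_ ?_)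
      · have hr1 : r.degree ≤ t.degree + 1 + 1 := by
          refine le_trans (degree_pint_le _) ?_
          exact add_le_add_left (degree_pint_le _) 1
        have ht1 : t.degree ≤ ((2 * n - 1 : ℕ) : WithBot ℕ) := by
          rw [htdef, Polynomial.degree_neg]
          exact le_trans (Polynomial.degree_add_le _ _)
            (max_le hpdeg (Polynomial.degree_C_mul_X_pow_le _ _))
        refine le_trans hr1 ?_
        refine le_trans (add_le_add_left (add_le_add_left ht1 1) 1) ?_
        have : ((2 * n - 1 : ℕ) : WithBot ℕ) + 1 + 1 = ((2 * n + 1 : ℕ) : WithBot ℕ) := by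
          have h3 : (2 * n - 1) + 1 + 1 = 2 * n + 1 := by omega
          rw [← h3]
          push_cast
          ring
        rw [this]
      · refine le_trans Polynomial.degree_linear_le ?_
        exact_mod_cast Nat.one_le_iff_ne_zero.mpr (by omega)
    · intro z hz
      have := hcd z hz
      rw [this, hWdef]
      simp only [Polynomial.eval_add, Polynomial.eval_mul, Polynomial.eval_C,
        Polynomial.eval_X]
      rw [hKdef]
      have : (-1 : ℝ) ^ (n + 1 + 1) = (-1) ^ (n + 2) := by ring_nf
      rw [this]
      ring
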